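/- Strong representative impossibility (construction direction): Let 𝓘 be a set of issues, 𝓓_𝓘 a saliency distribution, and let φ assign to each issue i a transitive directed graph φ(i) on vertex set [N] containing no simple directed cycle of length at least 3. Then there exist a candidate space 𝓒 ⊆ LO(N)^𝓘 such that for every issue i the privilege graph G_i of 𝓒 contains φ(i) as a subgraph, and a representational mechanism f over (𝓘, 𝓓_𝓘, 𝓒) that simultaneously satisfies PPE, S-PIIA, and S-PC for all populations 𝓓_𝓟. -/

import Mathlib

open scoped ENNReal

noncomputable section

/-- Linear orders on `[N] = {1,…,N}` (as `Fin N`), encoded as permutations: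
`o.symm c` is the rank of outcome `c` (smaller rank = more preferred). -/
abbrev LO (N : ℕ) := Equiv.Perm (Fin N)

/-- `c ≻_o c'` : outcome `c` is strictly preferred to `c'` under the linear order `o`. -/
def prefers {N : ℕ} (o : LO N) (c c' : Fin N) : Prop := o.symm c < o.symm c'

/-- `o ⊙ σ` : the linear order with `s₁ ≻_{o⊙σ} s₂` iff `σ⁻¹ s₁ ≻_o σ⁻¹ s₂`. -/
def odot {N : ℕ} (o σ : LO N) : LO N := o.trans σ

/-- `C ⊙ᵢ σ` : apply `σ` to the ordering of issue `i`, leaving other issues unchanged. -/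
def odotProfile {I : Type*} [DecidableEq I] {N : ℕ} (C : I → LO N) (i : I) (σ : LO N) :
    I → LO N :=
  Function.update C i (odot (C i) σ)

/-- The distribution of `m` i.i.d. draws from `p`. -/
def iidPMF {α : Type*} (p : PMF α) : (m : ℕ) → PMF (Fin m → α)
  | 0 => PMF.pure (fun i => i.elim0)
  | (m + 1) => p.bind fun a => (iidPMF p m).map (fun f => Fin.cons a f)

/-- Probability of an event under a PMF. -/
def prob {α : Type*} (p : PMF α) (s : Set α) : ℝ≥0∞ := p.toOuterMeasure s

/-- Distribution of one sampled individual-issue pair: `i ~ 𝓓_𝓘`, then `o ~ 𝓜(i)`. -/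
def sampleDist {I : Type*} {N : ℕ} (DI : PMF I) (M : I → PMF (LO N)) : PMF (LO N × I) :=
  DI.bind fun i => (M i).map fun o => (o, i)

/-- The events `E m` happen with probability `1 - e^{-Ω(m)}` over i.i.d. samples of size `m`. -/
def WithOverwhelmingProb {β : Type*} (p : PMF β) (E : ∀ m : ℕ, Set (Fin m → β)) : Prop :=
  ∃ a : ℝ, 0 < a ∧ ∃ m0 : ℕ, ∀ m : ℕ, m0 ≤ m →
    1 - ENNReal.ofReal (Real.exp (-(a * m))) ≤ prob (iidPMF p m) (E m)

/-- Same, over a pair of independent i.i.d. samples of size `m` from `p` and from `q`. -/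
def WithOverwhelmingProb2 {β γ : Type*} (p : PMF β) (q : PMF γ)
    (E : ∀ m : ℕ, Set ((Fin m → β) × (Fin m → γ))) : Prop :=
  ∃ a : ℝ, 0 < a ∧ ∃ m0 : ℕ, ∀ m : ℕ, m0 ≤ m →
    1 - ENNReal.ofReal (Real.exp (-(a * m))) ≤
      prob ((iidPMF p m).bind fun S => (iidPMF q m).map fun S' => (S, S')) (E m)

/-- Marginal on issue `i` of a population distribution over full profiles. -/
def marginal {I : Type*} {N : ℕ} (DP : PMF (I → LO N)) : I → PMF (LO N) :=
  fun i => DP.map fun C => C i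

/-- Every profile in the support of `D` ranks `c` above `c'` in issue `i`. -/
def UnanimousOn {I : Type*} {N : ℕ} (D : PMF (I → LO N)) (i : I) (c c' : Fin N) : Prop :=
  ∀ C ∈ D.support, prefers (C i) c c'

/-- `DP = lam • DP' + (1 - lam) • R`, i.e. `DP'` is a subpopulation of `DP` of mass `lam`. -/
def IsMixture {I : Type*} {N : ℕ} (DP DP' R : PMF (I → LO N)) (lam : ℝ) : Prop :=
  ∀ C : I → LO N, DP C = ENNReal.ofReal lam * DP' C + ENNReal.ofReal (1 - lam) * R C

/-- The partial ordering given by the list `l` (distinct outcomes, most preferred first)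
is privileged for issue `i` w.r.t. the candidate space `𝓒`. -/
def Privileged {I : Type*} [DecidableEq I] {N : ℕ} (𝓒 : Set (I → LO N)) (i : I)
    (l : List (Fin N)) : Prop :=
  ∀ C : I → LO N, l.Pairwise (prefers (C i)) →
    ∀ σ : LO N, (∀ x : Fin N, x ∉ l → σ x = x) →
      odotProfile C i σ ∈ 𝓒 → C ∈ 𝓒

/-- Edge `u → v` of the privilege graph `G_i`: the ordering `u ≻ v` is privileged. -/
def PrivEdge {I : Type*} [DecidableEq I] {N : ℕ} (𝓒 : Set (I → LO N)) (i : I)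
    (u v : Fin N) : Prop :=
  u ≠ v ∧ Privileged 𝓒 i [u, v]

/-- Probabilistic Pareto Efficiency (PPE) of mechanism `f`, at population marginal `M`. -/
def PPEat {I : Type*} [DecidableEq I] {N : ℕ} (𝓒 : Set (I → LO N)) (DI : PMF I)
    (f : ∀ m : ℕ, (Fin m → LO N × I) → (I → LO N)) (M : I → PMF (LO N)) : Prop :=
  ∀ C ∈ 𝓒, ∀ C' ∈ 𝓒, ∀ (i : I) (c c' : Fin N), c ≠ c' →
    prefers (C i) c c' →
    C' = odotProfile C i (Equiv.swap c c') →
    (∀ o : LO N, prefers o c' c → M i o = 0) →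
    WithOverwhelmingProb (sampleDist DI M) (fun m => {S | f m S ≠ C'})

/-- Strong Probabilistic Independence of Irrelevant Alternatives (S-PIIA), at the
pair of population marginals `M`, `M'`. -/
def SPIIAat {I : Type*} [DecidableEq I] {N : ℕ} (𝓒 : Set (I → LO N)) (DI : PMF I)
    (f : ∀ m : ℕ, (Fin m → LO N × I) → (I → LO N)) (M M' : I → PMF (LO N)) : Prop :=
  ∀ (i : I) (c c' : Fin N), c ≠ c' →
    Privileged 𝓒 i [c, c'] → Privileged 𝓒 i [c', c] →
    prob (M i) {o | prefers o c c'} = prob (M' i) {o | prefers o c c'} →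
    WithOverwhelmingProb2 (sampleDist DI M) (sampleDist DI M')
      (fun m => {p | prefers (f m p.1 i) c c' ↔ prefers (f m p.2 i) c c'})

/-- Strong Probabilistic Convergence (S-PC), at the population marginal `M`. -/
def SPCat {I : Type*} [DecidableEq I] {N : ℕ} (𝓒 : Set (I → LO N)) (DI : PMF I)
    (f : ∀ m : ℕ, (Fin m → LO N × I) → (I → LO N)) (M : I → PMF (LO N)) : Prop :=
  ∀ (i : I) (c c' : Fin N), c ≠ c' →
    Privileged 𝓒 i [c, c'] → Privileged 𝓒 i [c', c] →
    prob (M i) {o | prefers o c c'} ≠ 1 / 2 →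
    WithOverwhelmingProb (sampleDist DI M) (fun m => {S | prefers (f m S i) c c'}) ∨
    WithOverwhelmingProb (sampleDist DI M) (fun m => {S | prefers (f m S i) c' c})


/-!
The 2-cycles of a transitive `φ i` without simple cycles of length `≥ 3` are disjoint, so they
pair up outcomes, and the strict part of `φ i` is a strict order on these pairs. Fix a linear
order `base` extending it in which each pair is contiguous, and let the candidates be the
profiles that agree with `base` outside the pairs: then pairs are exactly the orderings that are
privileged both ways, and strict edges are privileged vacuously. The mechanism outputs `base`,
flipping a pair exactly when some sampled individual on that issue disagrees with `base` on it.
If the population gives that disagreement mass zero this never happens, otherwise it happens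
with probability `1 - e^{-Ω(m)}`; so the output on each pair converges to an order that depends
only on the population's probability of one order of the pair, which yields PPE, S-PIIA and S-PC.
-/

section Probability

open MeasureTheory

variable {α β γ : Type*}

lemma prob_mono (p : PMF α) {s t : Set α} (h : s ⊆ t) : prob p s ≤ prob p t :=
  measure_mono h

lemma prob_union_le (p : PMF α) (s t : Set α) : prob p (s ∪ t) ≤ prob p s + prob p t :=
  measure_union_le s t

lemma prob_univ (p : PMF α) : prob p Set.univ = 1 :=
  (p.toOuterMeasure_apply_eq_one_iff _).2 (Set.subset_univ _)

lemma prob_add_prob_compl (p : PMF α) (s : Set α) : prob p s + prob p sᶜ = 1 := by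
  simp only [prob, PMF.toOuterMeasure_apply]
  rw [← ENNReal.tsum_add, ← p.tsum_coe]
  exact tsum_congr fun x => Set.indicator_self_add_compl_apply s p x

lemma prob_compl (p : PMF α) (s : Set α) : prob p sᶜ = 1 - prob p s := by
  have hs : prob p s ≠ ⊤ :=
    ne_top_of_le_ne_top ENNReal.one_ne_top (le_self_add.trans_eq (prob_add_prob_compl p s))
  exact ENNReal.eq_sub_of_add_eq hs (by rw [add_comm, prob_add_prob_compl])

lemma one_sub_le_prob_iff (p : PMF α) (s : Set α) (e : ℝ≥0∞) :
    1 - e ≤ prob p s ↔ prob p sᶜ ≤ e := by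
  rw [prob_compl, tsub_le_iff_tsub_le]

lemma prob_iidPMF_forall_mem (p : PMF α) (B : Set α) (m : ℕ) :
    prob (iidPMF p m) {S | ∀ k, S k ∈ B} = prob p B ^ m := by
  induction m with
  | zero =>
    rw [pow_zero]
    exact (PMF.toOuterMeasure_apply_eq_one_iff _ _).2 fun S _ k => k.elim0
  | succ m ih =>
    have hcons (a : α) : prob ((iidPMF p m).map (Fin.cons a)) {S | ∀ k, S k ∈ B} =
        B.indicator (fun _ => prob p B ^ m) a := by
      by_cases ha : a ∈ B <;>
        simp [prob, PMF.toOuterMeasure_map_apply, Set.preimage, Fin.forall_fin_succ, ha] at ih ⊢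
      exact ih
    simp only [iidPMF, prob, PMF.toOuterMeasure_bind_apply] at hcons ⊢
    simp only [hcons, PMF.toOuterMeasure_apply, pow_succ', ← ENNReal.tsum_mul_right]
    refine tsum_congr fun a => ?_
    by_cases ha : a ∈ B <;> simp [ha]

lemma prob_pair_fst (p : PMF β) (q : PMF γ) (A : Set β) :
    prob (p.bind fun S => q.map fun S' => (S, S')) {x | x.1 ∈ A} = prob p A := by
  have hfst : (p.bind fun S => q.map fun S' => (S, S')).map Prod.fst = p := by
    simp only [PMF.map_bind, PMF.map_comp, Function.comp_def]
    exact (congrArg p.bind (funext fun S => PMF.map_const q S)).trans p.bind_pure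
  conv_rhs => rw [← hfst, prob, PMF.toOuterMeasure_map_apply]
  rfl

lemma prob_pair_snd (p : PMF β) (q : PMF γ) (A : Set γ) :
    prob (p.bind fun S => q.map fun S' => (S, S')) {x | x.2 ∈ A} = prob q A := by
  have hsnd : (p.bind fun S => q.map fun S' => (S, S')).map Prod.snd = q := by
    simp [PMF.map_bind, PMF.map_comp, Function.comp_def, PMF.bind_const]
    exact PMF.map_id q
  conv_rhs => rw [← hsnd, prob, PMF.toOuterMeasure_map_apply]
  rfl

end Probability

section Overwhelming

variable {β γ : Type*}

lemma exp_neg_add_exp_neg_le {a b : ℝ} (ha : 0 < a) (hb : 0 < b) :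
    ∃ c > 0, ∃ m0 : ℕ, ∀ m : ℕ, m0 ≤ m →
      Real.exp (-(a * m)) + Real.exp (-(b * m)) ≤ Real.exp (-(c * m)) := by
  set c := min a b / 2
  have hc : 0 < c := by positivity
  refine ⟨c, hc, ⌈c⁻¹⌉₊, fun m hm => ?_⟩
  have hcm : 1 ≤ c * m := by
    rw [← inv_mul_le_iff₀ hc, mul_one]
    exact Nat.ceil_le.1 hm
  have hm0 : (0 : ℝ) ≤ m := m.cast_nonneg
  have hca : 2 * c ≤ a := by simp only [c]; linarith [min_le_left a b]
  have hcb : 2 * c ≤ b := by simp only [c]; linarith [min_le_right a b]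
  have hle {x : ℝ} (hx : 2 * c ≤ x) : Real.exp (-(x * m)) ≤ Real.exp (-(c * m)) ^ 2 := by
    rw [← Real.exp_nat_mul, Real.exp_le_exp]
    push_cast
    nlinarith
  have htwo : 2 ≤ Real.exp (c * m) := by linarith [Real.add_one_le_exp (c * m)]
  have htwo' : 2 * Real.exp (-(c * m)) ≤ 1 := by
    rw [Real.exp_neg, ← div_eq_mul_inv, div_le_one (Real.exp_pos _)]
    exact htwo
  calc Real.exp (-(a * m)) + Real.exp (-(b * m))
      ≤ Real.exp (-(c * m)) ^ 2 + Real.exp (-(c * m)) ^ 2 :=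
        add_le_add (hle hca) (hle hcb)
    _ = (2 * Real.exp (-(c * m))) * Real.exp (-(c * m)) := by ring
    _ ≤ Real.exp (-(c * m)) := mul_le_of_le_one_left (Real.exp_nonneg _) htwo'

lemma one_sub_pow_le_exp {δ : ℝ≥0∞} (hδ : δ ≤ 1) (m : ℕ) :
    (1 - δ) ^ m ≤ ENNReal.ofReal (Real.exp (-(δ.toReal * m))) := by
  have hδ' : δ ≠ ⊤ := ne_top_of_le_ne_top ENNReal.one_ne_top hδ
  rw [show -(δ.toReal * m) = m * -δ.toReal by ring, Real.exp_nat_mul,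
    ENNReal.ofReal_pow (Real.exp_nonneg _)]
  refine pow_le_pow_left₀ zero_le ?_ m
  rw [← ENNReal.ofReal_toReal (ENNReal.sub_ne_top ENNReal.one_ne_top),
    ENNReal.toReal_sub_of_le hδ ENNReal.one_ne_top, ENNReal.toReal_one]
  exact ENNReal.ofReal_le_ofReal (Real.one_sub_le_exp_neg _)

lemma withOverwhelmingProb_of_compl_le (p : PMF β) (E : ∀ m : ℕ, Set (Fin m → β))
    {a : ℝ} (ha : 0 < a)
    (h : ∀ m : ℕ, prob (iidPMF p m) (E m)ᶜ ≤ ENNReal.ofReal (Real.exp (-(a * m)))) :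
    WithOverwhelmingProb p E :=
  ⟨a, ha, 0, fun m _ => (one_sub_le_prob_iff _ _ _).2 (h m)⟩

lemma WithOverwhelmingProb.mono {p : PMF β} {E E' : ∀ m : ℕ, Set (Fin m → β)}
    (hE : WithOverwhelmingProb p E) (h : ∀ m, E m ⊆ E' m) : WithOverwhelmingProb p E' := by
  obtain ⟨a, ha, m0, hm⟩ := hE
  exact ⟨a, ha, m0, fun m hm0 => (hm m hm0).trans (prob_mono _ (h m))⟩

lemma WithOverwhelmingProb2.mono {p : PMF β} {q : PMF γ}
    {E E' : ∀ m : ℕ, Set ((Fin m → β) × (Fin m → γ))}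
    (hE : WithOverwhelmingProb2 p q E) (h : ∀ m, E m ⊆ E' m) :
    WithOverwhelmingProb2 p q E' := by
  obtain ⟨a, ha, m0, hm⟩ := hE
  exact ⟨a, ha, m0, fun m hm0 => (hm m hm0).trans (prob_mono _ (h m))⟩

lemma WithOverwhelmingProb.prod {p : PMF β} {q : PMF γ} {E : ∀ m : ℕ, Set (Fin m → β)}
    {F : ∀ m : ℕ, Set (Fin m → γ)} (hE : WithOverwhelmingProb p E)
    (hF : WithOverwhelmingProb q F) :
    WithOverwhelmingProb2 p q (fun m => {x | x.1 ∈ E m ∧ x.2 ∈ F m}) := by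
  obtain ⟨a, ha, mE, hmE⟩ := hE
  obtain ⟨b, hb, mF, hmF⟩ := hF
  obtain ⟨c, hc, m0, hm0⟩ := exp_neg_add_exp_neg_le ha hb
  refine ⟨c, hc, max m0 (max mE mF), fun m hm => (one_sub_le_prob_iff _ _ _).2 ?_⟩
  simp only [max_le_iff] at hm
  have hcompl : {x : (Fin m → β) × (Fin m → γ) | x.1 ∈ E m ∧ x.2 ∈ F m}ᶜ =
      {x | x.1 ∈ (E m)ᶜ} ∪ {x | x.2 ∈ (F m)ᶜ} := by
    ext x
    simp [or_iff_not_imp_left]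
  rw [hcompl]
  refine (prob_union_le _ _ _).trans ?_
  rw [prob_pair_fst, prob_pair_snd]
  calc prob (iidPMF p m) (E m)ᶜ + prob (iidPMF q m) (F m)ᶜ
      ≤ ENNReal.ofReal (Real.exp (-(a * m))) + ENNReal.ofReal (Real.exp (-(b * m))) :=
        add_le_add ((one_sub_le_prob_iff _ _ _).1 (hmE m hm.2.1))
          ((one_sub_le_prob_iff _ _ _).1 (hmF m hm.2.2))
    _ ≤ ENNReal.ofReal (Real.exp (-(c * m))) := by
        rw [← ENNReal.ofReal_add (Real.exp_nonneg _) (Real.exp_nonneg _)]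
        exact ENNReal.ofReal_le_ofReal (hm0 m hm.1)

end Overwhelming

section Sampling

variable {N : ℕ} {I : Type*}

def Witnessed {m : ℕ} (i : I) (E : Set (LO N)) (S : Fin m → LO N × I) : Prop :=
  ∃ k, (S k).2 = i ∧ (S k).1 ∈ E

variable (DI : PMF I) (M : I → PMF (LO N)) (i : I) (E : Set (LO N))

lemma prob_sampleDist_issue_mem :
    prob (sampleDist DI M) {x | x.2 = i ∧ x.1 ∈ E} = DI i * prob (M i) E := by
  classical
  have hfiber (j : I) : prob ((M j).map fun o => (o, j)) {x | x.2 = i ∧ x.1 ∈ E} =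
      if j = i then prob (M i) E else 0 := by
    by_cases hj : j = i
    · subst hj; simp [prob, PMF.toOuterMeasure_map_apply, Set.preimage]
    · simp [prob, PMF.toOuterMeasure_map_apply, Set.preimage, hj]
  simp only [prob, sampleDist, PMF.toOuterMeasure_bind_apply] at hfiber ⊢
  simp only [hfiber, mul_ite, mul_zero, tsum_ite_eq]

lemma prob_not_witnessed (m : ℕ) :
    prob (iidPMF (sampleDist DI M) m) {S | ¬ Witnessed i E S} =
      (1 - DI i * prob (M i) E) ^ m := by
  have hset : {S : Fin m → LO N × I | ¬ Witnessed i E S} =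
      {S | ∀ k, S k ∈ {x : LO N × I | x.2 = i ∧ x.1 ∈ E}ᶜ} := by
    ext S
    simp [Witnessed]
  rw [hset, prob_iidPMF_forall_mem, prob_compl, prob_sampleDist_issue_mem]

lemma withOverwhelmingProb_witnessed_iff (hi : DI i ≠ 0) :
    WithOverwhelmingProb (sampleDist DI M)
      (fun _ => {S | Witnessed i E S ↔ prob (M i) E ≠ 0}) := by
  by_cases hE : prob (M i) E = 0
  · refine withOverwhelmingProb_of_compl_le _ _ one_pos fun m => le_of_eq_of_le ?_ zero_le
    have hset : {S : Fin m → LO N × I | Witnessed i E S ↔ prob (M i) E ≠ 0} =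
        {S | ¬ Witnessed i E S} := by
      ext S
      simp [hE]
    rw [hset, prob_compl, prob_not_witnessed, hE]
    simp
  · set δ := DI i * prob (M i) E
    have hδ1 : δ ≤ 1 :=
      mul_le_one' (DI.coe_le_one i) ((prob_mono _ (Set.subset_univ E)).trans_eq (prob_univ _))
    have hδ : 0 < δ.toReal :=
      ENNReal.toReal_pos (mul_ne_zero hi hE) (ne_top_of_le_ne_top ENNReal.one_ne_top hδ1)
    refine withOverwhelmingProb_of_compl_le _ _ hδ fun m => ?_
    have hset : {S : Fin m → LO N × I | Witnessed i E S ↔ prob (M i) E ≠ 0}ᶜ =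
        {S | ¬ Witnessed i E S} := by
      ext S
      simp [hE]
    rw [hset, prob_not_witnessed]
    exact one_sub_pow_le_exp hδ1 m

end Sampling

section LinearOrders

variable {N : ℕ}

lemma prefers_asymm {o : LO N} {c c' : Fin N} (h : prefers o c c') : ¬ prefers o c' c :=
  lt_asymm h

lemma ne_of_prefers {o : LO N} {c c' : Fin N} (h : prefers o c c') : c ≠ c' := by
  rintro rfl
  exact lt_irrefl _ h

lemma not_prefers_iff (o : LO N) {c c' : Fin N} (hcc : c ≠ c') :
    ¬ prefers o c c' ↔ prefers o c' c :=
  not_lt.trans (lt_iff_le_and_ne.trans (and_iff_left (o.symm.injective.ne hcc.symm))).symm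

lemma prefers_trans_iff (o σ : LO N) (x y : Fin N) :
    prefers (o.trans σ) x y ↔ prefers o (σ.symm x) (σ.symm y) :=
  Iff.rfl

lemma exists_perm_prefers_iff {α : Type*} [LinearOrder α] (g : Fin N → α)
    (hg : Function.Injective g) : ∃ o : LO N, ∀ u v, prefers o u v ↔ g u < g v := by
  classical
  set s := Finset.univ.image g
  have hs : s.card = N := by rw [Finset.card_image_of_injective _ hg, Finset.card_fin]
  set rank : Fin N → Fin N := fun u => (s.orderIsoOfFin hs).symm ⟨g u, by simp [s]⟩
  have hrank : Function.Bijective rank := Finite.injective_iff_bijective.1 fun u v h =>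
    hg (congrArg Subtype.val ((s.orderIsoOfFin hs).symm.injective h))
  refine ⟨(Equiv.ofBijective rank hrank).symm, fun u v => ?_⟩
  simp only [prefers, Equiv.symm_symm, Equiv.ofBijective_apply, rank, OrderIso.lt_iff_lt,
    Subtype.mk_lt_mk]

lemma exists_perm_prefers_of_lt {α : Type*} [LinearOrder α] (key : Fin N → α) :
    ∃ o : LO N, ∀ u v, key u < key v → prefers o u v := by
  obtain ⟨o, ho⟩ := exists_perm_prefers_iff (fun u => toLex (key u, u))
    fun u v h => congrArg Prod.snd (toLex.injective h)
  exact ⟨o, fun u v h => (ho u v).2 (Prod.Lex.toLex_lt_toLex.2 (Or.inl h))⟩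

lemma Equiv.Perm.apply_eq_or_eq_of_forall_ne {α : Type*} (σ : Equiv.Perm α) {a b : α}
    (h : ∀ x, x ≠ a → x ≠ b → σ x = x) : σ a = a ∨ σ a = b := by
  by_contra hne
  obtain ⟨ha, hb⟩ := not_or.1 hne
  exact ha (σ.injective (h _ ha hb))

end LinearOrders

section Partner

variable {N : ℕ}

def TransOnDistinct (ψ : Fin N → Fin N → Prop) : Prop :=
  ∀ u v w : Fin N, u ≠ v → v ≠ w → u ≠ w → ψ u v → ψ v w → ψ u w

def NoLongCycle (ψ : Fin N → Fin N → Prop) : Prop :=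
  ¬ ∃ (k : ℕ) (cyc : Fin (k + 3) → Fin N),
    Function.Injective cyc ∧ ∀ j : Fin (k + 3), ψ (cyc j) (cyc (j + 1))

variable {ψ : Fin N → Fin N → Prop}

lemma NoLongCycle.eq_of_mutual (hacyc : NoLongCycle ψ) (htr : TransOnDistinct ψ)
    {u v w : Fin N} (hv : u ≠ v) (hw : u ≠ w) (huv : ψ u v) (hvu : ψ v u) (huw : ψ u w)
    (hwu : ψ w u) : v = w := by
  by_contra hvw
  refine hacyc ⟨0, ![v, u, w], ?_, ?_⟩
  · simp only [Matrix.vecCons, Fin.cons_injective_iff]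
    simp [hv.symm, hvw, hw, Function.Injective, eq_iff_true_of_subsingleton]
  · intro j
    fin_cases j
    exacts [hvu, huw, htr w u v hw.symm hv (Ne.symm hvw) hwu huv]

lemma exists_partner (htr : TransOnDistinct ψ) (hacyc : NoLongCycle ψ) :
    ∃ p : Fin N → Fin N, Function.Involutive p ∧
      ∀ u v, u ≠ v → (ψ u v ∧ ψ v u ↔ p u = v) := by
  classical
  set p : Fin N → Fin N := fun u =>
    if h : ∃ v, u ≠ v ∧ ψ u v ∧ ψ v u then h.choose else u
  have hp : ∀ u v, u ≠ v → (ψ u v ∧ ψ v u ↔ p u = v) := by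
    intro u v huv
    constructor
    · intro h
      have hex : ∃ v, u ≠ v ∧ ψ u v ∧ ψ v u := ⟨v, huv, h⟩
      obtain ⟨hne, h1, h2⟩ := hex.choose_spec
      simp only [p, dif_pos hex]
      exact hacyc.eq_of_mutual htr hne huv h1 h2 h.1 h.2
    · intro h
      have hex : ∃ v, u ≠ v ∧ ψ u v ∧ ψ v u := by
        by_contra hex
        simp only [p, dif_neg hex] at h
        exact huv h
      simp only [p, dif_pos hex] at h
      exact h ▸ hex.choose_spec.2
  refine ⟨p, fun u => ?_, hp⟩
  by_cases hu : p u = u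
  · rw [hu, hu]
  · have h := (hp u (p u) (Ne.symm hu)).2 rfl
    exact (hp (p u) u hu).1 ⟨h.2, h.1⟩

lemma TransOnDistinct.strict_trans (htr : TransOnDistinct ψ) {x u v : Fin N}
    (hxu : ψ x u ∧ ¬ ψ u x) (huv : ψ u v ∧ ¬ ψ v u) :
    ψ x v ∧ ¬ ψ v x := by
  have hxu' : x ≠ u := by rintro rfl; exact hxu.2 hxu.1
  have huv' : u ≠ v := by rintro rfl; exact huv.2 huv.1
  have hxv : x ≠ v := by rintro rfl; exact huv.2 hxu.1
  exact ⟨htr x u v hxu' huv' hxv hxu.1 huv.1,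
    fun hvx => huv.2 (htr v x u (Ne.symm hxv) hxu' (Ne.symm huv') hvx hxu.1)⟩

lemma TransOnDistinct.strict_partner (htr : TransOnDistinct ψ) {p : Fin N → Fin N}
    (hp : ∀ u v, u ≠ v → (ψ u v ∧ ψ v u ↔ p u = v))
    {x u : Fin N} (h : ψ x u ∧ ¬ ψ u x) : ψ x (p u) ∧ ¬ ψ (p u) x := by
  by_cases hu : p u = u
  · rwa [hu]
  have hmut := (hp u (p u) (Ne.symm hu)).2 rfl
  have hxu : x ≠ u := by rintro rfl; exact h.2 h.1
  have hxp : x ≠ p u := by rintro rfl; exact h.2 hmut.1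
  exact ⟨htr x u (p u) hxu (Ne.symm hu) hxp h.1 hmut.1,
    fun hpx => h.2 (htr u (p u) x (Ne.symm hu) (Ne.symm hxp) (Ne.symm hxu) hmut.1 hpx)⟩

end Partner

/-- A linear order `base` together with an involution `partner` whose two-element orbits
`{u, partner u}` are intervals of `base`. -/
structure PairedOrder (N : ℕ) where
  partner : Fin N → Fin N
  involutive : Function.Involutive partner
  base : LO N
  prefers_partner : ∀ u v, v ≠ partner u → prefers base u v → prefers base (partner u) v

namespace PairedOrder

variable {N : ℕ} (P : PairedOrder N)

def IsFixed (u v : Fin N) : Prop := prefers P.base u v ∧ v ≠ P.partner u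

def PreservesPairs (τ : Fin N → Fin N) : Prop := ∀ x, τ x = x ∨ τ x = P.partner x

structure Adapted (ψ : Fin N → Fin N → Prop) : Prop where
  partner_eq_iff : ∀ u v, u ≠ v → (ψ u v ∧ ψ v u ↔ P.partner u = v)
  prefers_of_strict : ∀ u v, ψ u v → ¬ ψ v u → prefers P.base u v

variable {P}

lemma IsFixed.partner_left {u v : Fin N} (h : P.IsFixed u v) : P.IsFixed (P.partner u) v :=
  ⟨P.prefers_partner u v h.2 h.1, by rw [P.involutive u]; exact (ne_of_prefers h.1).symm⟩

lemma IsFixed.partner_right {u v : Fin N} (h : P.IsFixed u v) : P.IsFixed u (P.partner v) := by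
  have huv : u ≠ v := ne_of_prefers h.1
  have hpv : P.partner v ≠ u := by rintro rfl; exact h.2 (P.involutive v).symm
  refine ⟨(not_prefers_iff _ hpv).1 fun hvu => ?_,
    fun e => huv (P.involutive.injective e).symm⟩
  have hfix : P.IsFixed (P.partner v) u := ⟨hvu, by rwa [P.involutive v]⟩
  have := hfix.partner_left
  rw [P.involutive v] at this
  exact prefers_asymm h.1 this.1

lemma IsFixed.map {u v : Fin N} (h : P.IsFixed u v) {τ : Fin N → Fin N}
    (hτ : P.PreservesPairs τ) : P.IsFixed (τ u) (τ v) := by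
  rcases hτ u with hu | hu <;> rcases hτ v with hv | hv <;> rw [hu, hv]
  exacts [h, h.partner_right, h.partner_left, h.partner_left.partner_right]

lemma exists_partner_eq {p : Fin N → Fin N} (hp : Function.Involutive p) {α : Type*}
    [LinearOrder α] (height : Fin N → α) (height_partner : ∀ u, height (p u) = height u) :
    ∃ P : PairedOrder N, P.partner = p ∧
      ∀ u v, height u < height v → prefers P.base u v := by
  set key : Fin N → α ×ₗ Fin N := fun u => toLex (height u, min u (p u))
  have key_partner (u : Fin N) : key (p u) = key u := by
    simp only [key, height_partner, hp u, min_comm]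
  obtain ⟨o, ho⟩ := exists_perm_prefers_of_lt key
  refine ⟨⟨p, hp, o, fun u v hv huv => ?_⟩, rfl,
    fun u v h => ho u v (Prod.Lex.toLex_lt_toLex.2 (Or.inl h))⟩
  have hne : key u ≠ key v := by
    intro h
    have hmin : min u (p u) = min v (p v) := congrArg Prod.snd (toLex.injective h)
    rcases min_choice u (p u) with h1 | h1 <;> rcases min_choice v (p v) with h2 | h2 <;>
      rw [h1, h2] at hmin
    · exact ne_of_prefers huv hmin
    · exact hv (by rw [hmin, hp])
    · exact hv hmin.symm
    · exact ne_of_prefers huv (hp.injective hmin)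
  have hlt : key u < key v := lt_of_le_of_ne (not_lt.1 fun h => prefers_asymm huv (ho v u h)) hne
  exact ho _ _ ((key_partner u).symm ▸ hlt)

lemma exists_adapted {ψ : Fin N → Fin N → Prop} (htr : TransOnDistinct ψ)
    (hacyc : NoLongCycle ψ) : ∃ P : PairedOrder N, P.Adapted ψ := by
  classical
  obtain ⟨p, hp_inv, hp⟩ := exists_partner htr hacyc
  set height : Fin N → ℕ := fun u => (Finset.univ.filter fun x => ψ x u ∧ ¬ ψ u x).card
  have height_partner (u : Fin N) : height (p u) = height u := by
    refine congrArg Finset.card (Finset.filter_congr fun x _ => ⟨fun h => ?_, ?_⟩)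
    · simpa only [hp_inv u] using htr.strict_partner hp h
    · exact htr.strict_partner hp
  have height_lt {u v : Fin N} (h : ψ u v ∧ ¬ ψ v u) : height u < height v := by
    refine Finset.card_lt_card ⟨fun x hx => ?_, fun hsub => ?_⟩
    · simp only [Finset.mem_filter] at hx ⊢
      exact ⟨hx.1, htr.strict_trans hx.2 h⟩
    · have hu := hsub (by simpa using h)
      simp only [Finset.mem_filter] at hu
      exact hu.2.2 hu.2.1
  obtain ⟨P, rfl, hP⟩ := exists_partner_eq hp_inv height height_partner
  exact ⟨P, ⟨hp, fun u v h1 h2 => hP u v (height_lt ⟨h1, h2⟩)⟩⟩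

end PairedOrder

section Disagreement

variable {N : ℕ}

def disagreeSet (o₀ : LO N) (c c' : Fin N) : Set (LO N) :=
  {o | ¬ (prefers o c c' ↔ prefers o₀ c c')}

lemma setOf_prefers_swap {c c' : Fin N} (hcc : c ≠ c') :
    {o : LO N | prefers o c' c} = {o | prefers o c c'}ᶜ := by
  ext o
  exact (not_prefers_iff o hcc).symm

lemma disagreeSet_comm (o₀ : LO N) {c c' : Fin N} (hcc : c ≠ c') :
    disagreeSet o₀ c c' = disagreeSet o₀ c' c := by
  ext o
  simp only [disagreeSet, Set.mem_ofPred_eq, ← not_prefers_iff _ hcc, not_iff_not]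

open scoped Classical in
lemma disagreeSet_eq (o₀ : LO N) (c c' : Fin N) :
    disagreeSet o₀ c c' =
      if prefers o₀ c c' then {o | prefers o c c'}ᶜ else {o | prefers o c c'} := by
  ext o
  split_ifs with h <;> simp [disagreeSet, h]

lemma prob_disagreeSet_eq_zero_iff (μ : PMF (LO N)) (o₀ : LO N) {c c' : Fin N} (hcc : c ≠ c')
    (h0 : prob μ {o | prefers o c' c} = 0) :
    prob μ (disagreeSet o₀ c c') = 0 ↔ prefers o₀ c c' := by
  rw [setOf_prefers_swap hcc] at h0
  rw [disagreeSet_eq o₀ c c']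
  split_ifs with h
  · simp [h, h0]
  · rw [← compl_compl {o : LO N | prefers o c c'}, prob_compl, h0]
    simp [h]

lemma prob_disagreeSet_congr (μ μ' : PMF (LO N)) (o₀ : LO N) {c c' : Fin N}
    (h : prob μ {o | prefers o c c'} = prob μ' {o | prefers o c c'}) :
    prob μ (disagreeSet o₀ c c') = prob μ' (disagreeSet o₀ c c') := by
  rw [disagreeSet_eq o₀ c c']
  split_ifs
  · rw [prob_compl, prob_compl, h]
  · exact h

end Disagreement

namespace PairedOrder

variable {N : ℕ} {I : Type*} (P : PairedOrder N)

def Respects (o : LO N) : Prop := ∀ u v, P.IsFixed u v → prefers o u v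

variable {P}

lemma respects_base : P.Respects P.base := fun _ _ h => h.1

lemma Respects.trans {o σ : LO N} (ho : P.Respects o) (hσ : P.PreservesPairs σ.symm) :
    P.Respects (o.trans σ) :=
  fun _ _ h => ho _ _ (h.map hσ)

lemma isFixed_or_isFixed {c c' : Fin N} (hcc : c ≠ c') (hc' : c' ≠ P.partner c) :
    P.IsFixed c c' ∨ P.IsFixed c' c := by
  have hc : c ≠ P.partner c' := fun e => hc' (by rw [e, P.involutive])
  by_cases h : prefers P.base c c'
  · exact Or.inl ⟨h, hc'⟩
  · exact Or.inr ⟨(not_prefers_iff _ hcc).1 h, hc⟩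

variable (P)

def Challenged {m : ℕ} (i : I) (S : Fin m → LO N × I) (x : Fin N) : Prop :=
  Witnessed i (disagreeSet P.base x (P.partner x)) S

lemma challenged_partner {m : ℕ} (i : I) (S : Fin m → LO N × I) (x : Fin N) :
    P.Challenged i S (P.partner x) ↔ P.Challenged i S x := by
  by_cases hx : P.partner x = x
  · rw [hx]
  · rw [Challenged, Challenged, P.involutive x, disagreeSet_comm _ hx]

open scoped Classical in
def flip {m : ℕ} (i : I) (S : Fin m → LO N × I) : LO N :=
  Function.Involutive.toPerm (fun x => if P.Challenged i S x then P.partner x else x) fun x => by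
    by_cases hx : P.Challenged i S x
    · simp [hx, P.challenged_partner, P.involutive x]
    · simp [hx]

open scoped Classical in
lemma flip_apply {m : ℕ} (i : I) (S : Fin m → LO N × I) (x : Fin N) :
    P.flip i S x = if P.Challenged i S x then P.partner x else x :=
  rfl

lemma flip_symm {m : ℕ} (i : I) (S : Fin m → LO N × I) : (P.flip i S).symm = P.flip i S :=
  Function.Involutive.toPerm_symm _

lemma preservesPairs_flip {m : ℕ} (i : I) (S : Fin m → LO N × I) :
    P.PreservesPairs (P.flip i S) := by
  intro x
  by_cases hx : P.Challenged i S x <;> simp [flip_apply, hx]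

end PairedOrder

section Construction

variable {N : ℕ} {I : Type*} (P : I → PairedOrder N)

def candidateSpace : Set (I → LO N) := {C | ∀ i, (P i).Respects (C i)}

def mechanism (m : ℕ) (S : Fin m → LO N × I) (i : I) : LO N :=
  (P i).base.trans ((P i).flip i S)

variable {P}

lemma mechanism_mem (m : ℕ) (S : Fin m → LO N × I) : mechanism P m S ∈ candidateSpace P :=
  fun i => PairedOrder.respects_base.trans ((P i).flip_symm i S ▸ (P i).preservesPairs_flip i S)

variable (DI : PMF I) (M : I → PMF (LO N))

lemma prefers_mechanism_partner_iff {m : ℕ} (S : Fin m → LO N × I) {i : I} {c : Fin N}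
    (hc : (P i).partner c ≠ c) :
    prefers (mechanism P m S i) c ((P i).partner c) ↔
      (prefers (P i).base c ((P i).partner c) ↔ ¬ (P i).Challenged i S c) := by
  rw [mechanism, prefers_trans_iff, PairedOrder.flip_symm, PairedOrder.flip_apply,
    PairedOrder.flip_apply, PairedOrder.challenged_partner, (P i).involutive c]
  by_cases hch : (P i).Challenged i S c
  · simp only [hch, if_true, not_true_eq_false, iff_false]
    exact (not_prefers_iff _ hc.symm).symm
  · simp [hch]

lemma withOverwhelmingProb_prefers_mechanism {i : I} (hi : DI i ≠ 0) {c : Fin N}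
    (hc : (P i).partner c ≠ c) :
    WithOverwhelmingProb (sampleDist DI M) fun m => {S | prefers (mechanism P m S i) c
      ((P i).partner c) ↔ (prefers (P i).base c ((P i).partner c) ↔
        prob (M i) (disagreeSet (P i).base c ((P i).partner c)) = 0)} := by
  refine (withOverwhelmingProb_witnessed_iff DI M i
    (disagreeSet (P i).base c ((P i).partner c)) hi).mono fun m S hS => ?_
  simp only [Set.mem_ofPred_eq] at hS ⊢
  rw [prefers_mechanism_partner_iff S hc, PairedOrder.Challenged, hS, not_not]

variable [DecidableEq I]

lemma prefers_odotProfile_self (C : I → LO N) (i : I) (σ : LO N) (x y : Fin N) :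
    prefers (odotProfile C i σ i) x y ↔ prefers (C i) (σ.symm x) (σ.symm y) := by
  simp only [odotProfile, odot, Function.update_self]
  rfl

lemma odotProfile_odotProfile_symm (C : I → LO N) (i : I) (σ : LO N) :
    odotProfile (odotProfile C i σ) i σ.symm = C := by
  ext1 j
  by_cases hj : j = i
  · subst hj
    simp [odotProfile, odot, Equiv.trans_assoc]
  · simp [odotProfile, hj]

lemma odotProfile_mem {C : I → LO N} (hC : C ∈ candidateSpace P) {i : I} {σ : LO N}
    (hσ : (P i).PreservesPairs σ.symm) : odotProfile C i σ ∈ candidateSpace P := by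
  intro j
  by_cases hj : j = i
  · subst hj
    intro u v huv
    exact (prefers_odotProfile_self C j σ u v).2 (hC j _ _ (huv.map hσ))
  · simpa [odotProfile, hj] using hC j

lemma mem_of_odotProfile_mem {C : I → LO N} {i : I} {σ : LO N}
    (hσ : (P i).PreservesPairs σ) (h : odotProfile C i σ ∈ candidateSpace P) :
    C ∈ candidateSpace P := by
  rw [← odotProfile_odotProfile_symm C i σ]
  exact odotProfile_mem h (by rwa [Equiv.symm_symm])

lemma privileged_partner (i : I) (u : Fin N) :
    Privileged (candidateSpace P) i [u, (P i).partner u] := by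
  intro C _ σ hσ hmem
  have hfix (x : Fin N) (hu : x ≠ u) (hpu : x ≠ (P i).partner u) : σ x = x :=
    hσ x (by simp [hu, hpu])
  refine mem_of_odotProfile_mem (fun x => ?_) hmem
  by_cases hxu : x = u
  · subst hxu
    exact σ.apply_eq_or_eq_of_forall_ne hfix
  by_cases hxpu : x = (P i).partner u
  · subst hxpu
    rw [(P i).involutive u]
    exact σ.apply_eq_or_eq_of_forall_ne fun y h1 h2 => hfix y h2 h1
  · exact Or.inl (hfix x hxu hxpu)

lemma privileged_of_isFixed {i : I} {u v : Fin N} (huv : (P i).IsFixed u v) :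
    Privileged (candidateSpace P) i [u, v] := by
  intro C hC σ hσ hmem
  have hfix (x : Fin N) (hu : x ≠ u) (hv : x ≠ v) : σ x = x := hσ x (by simp [hu, hv])
  have hne : u ≠ v := ne_of_prefers huv.1
  have hσv : σ v = v ∨ σ v = u := σ.apply_eq_or_eq_of_forall_ne fun y h1 h2 => hfix y h2 h1
  rcases σ.apply_eq_or_eq_of_forall_ne hfix with hu | hu
  · have hv : σ v = v := hσv.resolve_right fun h => hne (σ.injective (hu.trans h.symm))
    refine mem_of_odotProfile_mem (fun x => Or.inl ?_) hmem
    by_cases hxu : x = u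
    · rwa [hxu]
    by_cases hxv : x = v
    · rwa [hxv]
    · exact hfix x hxu hxv
  · have hv : σ v = u := hσv.resolve_left fun h => hne (σ.injective (hu.trans h.symm))
    have := (prefers_odotProfile_self C i σ u v).1 (hmem i u v huv)
    rw [σ.symm_apply_eq.2 hv.symm, σ.symm_apply_eq.2 hu.symm] at this
    exact absurd (List.pairwise_pair.1 hC) (prefers_asymm this)

end Construction

section Properties

variable {N : ℕ} {I : Type*} [DecidableEq I] {P : I → PairedOrder N}

lemma not_privileged_of_isFixed {i : I} {u v : Fin N} (huv : (P i).IsFixed u v) :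
    ¬ Privileged (candidateSpace P) i [v, u] := by
  intro hpriv
  set C := odotProfile (fun j => (P j).base) i (Equiv.swap u v)
  have hswap (x y : Fin N) : prefers (C i) x y ↔
      prefers (P i).base (Equiv.swap u v x) (Equiv.swap u v y) := by
    rw [prefers_odotProfile_self, Equiv.symm_swap]
  have hC : C ∈ candidateSpace P := by
    refine hpriv C ?_ (Equiv.swap u v) (fun x hx => ?_) ?_
    · simpa [hswap] using huv.1
    · simp only [List.mem_cons, List.not_mem_nil, or_false, not_or] at hx
      exact Equiv.swap_apply_of_ne_of_ne hx.2 hx.1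
    · have := odotProfile_odotProfile_symm (fun j => (P j).base) i (Equiv.swap u v)
      rw [Equiv.symm_swap] at this
      rw [this]
      exact fun j => PairedOrder.respects_base
  have := (hswap u v).1 (hC i u v huv)
  simp only [Equiv.swap_apply_left, Equiv.swap_apply_right] at this
  exact prefers_asymm huv.1 this

lemma eq_partner_of_privileged {i : I} {c c' : Fin N} (hcc : c ≠ c')
    (h : Privileged (candidateSpace P) i [c, c']) (h' : Privileged (candidateSpace P) i [c', c]) :
    c' = (P i).partner c := by
  by_contra hne
  rcases PairedOrder.isFixed_or_isFixed hcc hne with hfix | hfix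
  exacts [not_privileged_of_isFixed hfix h', not_privileged_of_isFixed hfix h]

lemma eq_partner_of_odotProfile_swap_mem {C : I → LO N} (hC : C ∈ candidateSpace P) {i : I}
    {c c' : Fin N} (hcc : c ≠ c')
    (hC' : odotProfile C i (Equiv.swap c c') ∈ candidateSpace P) : c' = (P i).partner c := by
  by_contra hne
  have hswap (x y : Fin N) : prefers (odotProfile C i (Equiv.swap c c') i) x y ↔
      prefers (C i) (Equiv.swap c c' x) (Equiv.swap c c' y) := by
    rw [prefers_odotProfile_self, Equiv.symm_swap]
  rcases PairedOrder.isFixed_or_isFixed hcc hne with hfix | hfix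
  · have := (hswap c c').1 (hC' i _ _ hfix)
    simp only [Equiv.swap_apply_left, Equiv.swap_apply_right] at this
    exact prefers_asymm (hC i _ _ hfix) this
  · have := (hswap c' c).1 (hC' i _ _ hfix)
    simp only [Equiv.swap_apply_left, Equiv.swap_apply_right] at this
    exact prefers_asymm (hC i _ _ hfix) this

lemma privEdge_candidateSpace {ψ : Fin N → Fin N → Prop} {i : I} (hP : (P i).Adapted ψ)
    {u v : Fin N} (huv : u ≠ v) (h : ψ u v) : PrivEdge (candidateSpace P) i u v := by
  refine ⟨huv, ?_⟩
  by_cases hvu : ψ v u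
  · obtain rfl := (hP.partner_eq_iff u v huv).1 ⟨h, hvu⟩
    exact privileged_partner i u
  · exact privileged_of_isFixed ⟨hP.prefers_of_strict u v h hvu,
      fun e => hvu ((hP.partner_eq_iff u v huv).2 e.symm).2⟩

variable {DI : PMF I}

lemma ppe_mechanism (hDI : ∀ i, DI i ≠ 0) (DP : PMF (I → LO N)) :
    PPEat (candidateSpace P) DI (mechanism P) (marginal DP) := by
  intro C hC C' hC' i c c' hcc hpref hC'eq hunan
  obtain rfl := eq_partner_of_odotProfile_swap_mem hC hcc (hC'eq ▸ hC')
  have hzero : prob (marginal DP i) {o | prefers o ((P i).partner c) c} = 0 :=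
    (PMF.toOuterMeasure_apply_eq_zero_iff _ _).2
      (Set.disjoint_left.2 fun o ho ho' => (PMF.mem_support_iff _ _).1 ho (hunan o ho'))
  refine (withOverwhelmingProb_prefers_mechanism DI _ (hDI i) hcc.symm).mono fun m S hS hout => ?_
  have hprefers := hS.2 (prob_disagreeSet_eq_zero_iff _ _ hcc hzero).symm
  rw [hout, hC'eq, prefers_odotProfile_self, Equiv.symm_swap, Equiv.swap_apply_left,
    Equiv.swap_apply_right] at hprefers
  exact prefers_asymm hpref hprefers

lemma spiia_mechanism (hDI : ∀ i, DI i ≠ 0) (DP DP' : PMF (I → LO N)) :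
    SPIIAat (candidateSpace P) DI (mechanism P) (marginal DP) (marginal DP') := by
  intro i c c' hcc h h' hprob
  obtain rfl := eq_partner_of_privileged hcc h h'
  refine ((withOverwhelmingProb_prefers_mechanism DI _ (hDI i) hcc.symm).prod
    (withOverwhelmingProb_prefers_mechanism DI _ (hDI i) hcc.symm)).mono fun m x hx => ?_
  obtain ⟨h1, h2⟩ := hx
  simp only [Set.mem_ofPred_eq] at h1 h2 ⊢
  rw [h1, h2, prob_disagreeSet_congr _ _ _ hprob]

lemma spc_mechanism (hDI : ∀ i, DI i ≠ 0) (DP : PMF (I → LO N)) :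
    SPCat (candidateSpace P) DI (mechanism P) (marginal DP) := by
  intro i c c' hcc h h' _
  obtain rfl := eq_partner_of_privileged hcc h h'
  have hwop := withOverwhelmingProb_prefers_mechanism DI (marginal DP) (hDI i) hcc.symm
  by_cases hlim : prefers (P i).base c ((P i).partner c) ↔
      prob (marginal DP i) (disagreeSet (P i).base c ((P i).partner c)) = 0
  · exact Or.inl (hwop.mono fun m S hS => hS.2 hlim)
  · exact Or.inr (hwop.mono fun m S hS => (not_prefers_iff _ hcc).1 fun h => hlim (hS.1 h))

end Properties

theorem strong_representative_construction_general (N : ℕ)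
    (I : Type) [DecidableEq I]
    (DI : PMF I) (hDI : ∀ i : I, DI i ≠ 0)
    (φ : I → Fin N → Fin N → Prop)
    (htrans : ∀ (i : I) (u v w : Fin N), u ≠ v → v ≠ w → u ≠ w →
      φ i u v → φ i v w → φ i u w)
    (hacyc : ∀ i : I, ¬ ∃ (k : ℕ) (cyc : Fin (k + 3) → Fin N),
      Function.Injective cyc ∧ ∀ j : Fin (k + 3), φ i (cyc j) (cyc (j + 1))) :
    ∃ (𝓒 : Set (I → LO N)) (f : ∀ m : ℕ, (Fin m → LO N × I) → (I → LO N)),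
      𝓒.Nonempty ∧
      (∀ (m : ℕ) (S : Fin m → LO N × I), f m S ∈ 𝓒) ∧
      (∀ (i : I) (u v : Fin N), u ≠ v → φ i u v → PrivEdge 𝓒 i u v) ∧
      (∀ DP : PMF (I → LO N), PPEat 𝓒 DI f (marginal DP)) ∧
      (∀ DP DP' : PMF (I → LO N), SPIIAat 𝓒 DI f (marginal DP) (marginal DP')) ∧
      (∀ DP : PMF (I → LO N), SPCat 𝓒 DI f (marginal DP)) := by
  choose P hP using fun i => PairedOrder.exists_adapted (htrans i) (hacyc i)
  exact ⟨candidateSpace P, mechanism P,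
    ⟨fun i => (P i).base, fun i => PairedOrder.respects_base⟩, mechanism_mem,
    fun i u v huv h => privEdge_candidateSpace (hP i) huv h,
    ppe_mechanism hDI, spiia_mechanism hDI, spc_mechanism hDI⟩

/-- **Strong representative impossibility (construction direction).** Let `φ` assign to
each issue `i` a directed graph on `[N]` that is transitive (among distinct vertices) and
contains no simple directed cycle of length at least 3. Then there exist a candidate space
`𝓒` whose privilege graph `G_i` contains `φ(i)` as a subgraph for every issue `i`, and a
representational mechanism `f` over `(𝓘, 𝓓_𝓘, 𝓒)` simultaneously satisfying PPE, S-PIIA,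
and S-PC for all populations `𝓓_𝓟`. -/
theorem strong_representative_construction (N : ℕ) (hN : 2 ≤ N)
    (I : Type) [DecidableEq I]
    (DI : PMF I) (hDI : ∀ i : I, DI i ≠ 0)
    (φ : I → Fin N → Fin N → Prop)
    (htrans : ∀ (i : I) (u v w : Fin N), u ≠ v → v ≠ w → u ≠ w →
      φ i u v → φ i v w → φ i u w)
    (hacyc : ∀ i : I, ¬ ∃ (k : ℕ) (cyc : Fin (k + 3) → Fin N),
      Function.Injective cyc ∧ ∀ j : Fin (k + 3), φ i (cyc j) (cyc (j + 1))) :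
    ∃ (𝓒 : Set (I → LO N)) (f : ∀ m : ℕ, (Fin m → LO N × I) → (I → LO N)),
      𝓒.Nonempty ∧
      (∀ (m : ℕ) (S : Fin m → LO N × I), f m S ∈ 𝓒) ∧
      (∀ (i : I) (u v : Fin N), u ≠ v → φ i u v → PrivEdge 𝓒 i u v) ∧
      (∀ DP : PMF (I → LO N), PPEat 𝓒 DI f (marginal DP)) ∧
      (∀ DP DP' : PMF (I → LO N), SPIIAat 𝓒 DI f (marginal DP) (marginal DP')) ∧
      (∀ DP : PMF (I → LO N), SPCat 𝓒 DI f (marginal DP)) :=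
  strong_representative_construction_general N I DI hDI φ htrans hacyc
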